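/- arXiv:1302.2766 — 2 statements merged into one kernel-verified Lean document; each statement's English description precedes it below -/
import Mathlib

section
/- Let $n\ge 1$ be an integer and let $a_k = e^{\pi i k^2/n}$ for $0\le k\le n-1$. Then for every integer $u$ with $1\le u\le n-1$, the aperiodic autocorrelation $c_u = \sum_{j=0}^{n-1-u} a_j\overline{a_{j+u}}$ satisfies $|c_u| = \left|\frac{\sin(\pi u^2/n)}{\sin(\pi u/n)}\right|$. -/
/-!
Since `j² - (j + u)² = -u² - 2uj`, the products `a_j conj(a_{j+u})` form a geometric progression
with ratio `e^{-2πiu/n}` and `n - u` terms. Its sum has modulus `|sin((n-u)πu/n)| / |sin(πu/n)|`,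
and `(n - u)πu/n = uπ - πu²/n` differs from `πu²/n` by a multiple of `π` up to sign.
-/

open Complex Finset ComplexConjugate
open scoped Real

lemma norm_geom_sum_exp_I_mul (θ : ℝ) (m : ℕ) (hθ : Real.sin (θ / 2) ≠ 0) :
    ‖∑ j ∈ range m, exp (I * θ) ^ j‖ = |Real.sin (m * θ / 2)| / |Real.sin (θ / 2)| := by
  have hz : exp (I * θ) ≠ 1 := by
    intro h
    have := norm_exp_I_mul_ofReal_sub_one θ
    simp [h, hθ] at this
  rw [geom_sum_eq hz, norm_div, ← exp_nat_mul,
    show (m : ℂ) * (I * θ) = I * ((m * θ : ℝ) : ℂ) by push_cast; ring,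
    norm_exp_I_mul_ofReal_sub_one, norm_exp_I_mul_ofReal_sub_one]
  simp only [norm_mul, Real.norm_eq_abs, abs_two]
  exact mul_div_mul_left _ _ two_ne_zero

lemma chirp_mul_conj_shift (n u : ℝ) (j : ℕ) :
    exp (π * I * (j : ℂ) ^ 2 / n) * conj (exp (π * I * ((j : ℂ) + u) ^ 2 / n)) =
      exp (I * (-(π * u ^ 2 / n) : ℝ)) * exp (I * (-(2 * π * u / n) : ℝ)) ^ j := by
  rw [← exp_conj, ← exp_add, ← exp_nat_mul, ← exp_add]
  congr 1
  simp only [map_div₀, map_mul, map_pow, map_add, conj_I, conj_ofReal, map_natCast]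
  push_cast
  ring

theorem chu_autocorrelation_abs_general (n : ℕ) (u : ℕ) (hu1 : 1 ≤ u) (hu2 : u ≤ n - 1) :
    ‖(∑ j ∈ Finset.range (n - u),
        Complex.exp (Real.pi * Complex.I * (j : ℂ) ^ 2 / (n : ℂ)) *
          (starRingEnd ℂ) (Complex.exp (Real.pi * Complex.I * ((j : ℂ) + u) ^ 2 / (n : ℂ))))‖ =
      |Real.sin (Real.pi * (u : ℝ) ^ 2 / n) / Real.sin (Real.pi * (u : ℝ) / n)| := by
  have hun : (u : ℝ) < n := by exact_mod_cast (show u < n by omega)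
  have hu : (0 : ℝ) < u := by exact_mod_cast hu1
  have hn : (0 : ℝ) < n := hu.trans hun
  have hsin : Real.sin (π * u / n) ≠ 0 := by
    refine (Real.sin_pos_of_pos_of_lt_pi (by positivity) ?_).ne'
    rw [div_lt_iff₀ hn]
    nlinarith [Real.pi_pos]
  have hhalf : -(2 * π * u / n) / 2 = -(π * u / n) := by ring
  have hnum : ((n - u : ℕ) : ℝ) * -(2 * π * u / n) / 2 = π * u ^ 2 / n - u * π := by
    rw [Nat.cast_sub (by omega)]
    field_simp
    ring
  have hterm := fun j (_ : j ∈ range (n - u)) => by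
    simpa only [ofReal_natCast] using chirp_mul_conj_shift n u j
  rw [sum_congr rfl hterm, ← mul_sum, norm_mul, norm_exp_I_mul_ofReal, one_mul,
    norm_geom_sum_exp_I_mul _ _ (by rwa [hhalf, Real.sin_neg, neg_ne_zero]), hhalf, hnum,
    Real.sin_sub_nat_mul_pi, Real.sin_neg, abs_neg, abs_mul, abs_pow, abs_neg, abs_one, one_pow,
    one_mul, abs_div]

/-- For `a_k = e^{π i k²/n}` and `1 ≤ u ≤ n-1`, the aperiodic autocorrelation
`c_u = ∑_{j=0}^{n-1-u} a_j conj(a_{j+u})` satisfies `|c_u| = |sin(π u²/n)/sin(π u/n)|`. -/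
theorem chu_autocorrelation_abs (n : ℕ) (hn : 1 ≤ n) (u : ℕ) (hu1 : 1 ≤ u) (hu2 : u ≤ n - 1) :
    ‖(∑ j ∈ Finset.range (n - u),
        Complex.exp (Real.pi * Complex.I * (j : ℂ) ^ 2 / (n : ℂ)) *
          (starRingEnd ℂ) (Complex.exp (Real.pi * Complex.I * ((j : ℂ) + u) ^ 2 / (n : ℂ))))‖ =
      |Real.sin (Real.pi * (u : ℝ) ^ 2 / n) / Real.sin (Real.pi * (u : ℝ) / n)| :=
  chu_autocorrelation_abs_general n u hu1 hu2
end

section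
/- Let $n\ge 2$ be an even integer and let $c_u$ for $0\le u\le n^2-1$ denote the aperiodic autocorrelations of the coefficient sequence of $h_n$. Then $2\sum_{u=0}^{n-1}|c_{nu+n/2}|^2 = n^2$. -/
/-- The coefficients of `h_n`: `b_{nj+k} = ζ^{jk}` with `ζ = e^{2πi/n}`, for `0 ≤ j,k < n`;
here `j = m / n` and `k = m % n` for an index `m = nj + k`. -/
noncomputable def hCoef (n : ℕ) (m : ℕ) : ℂ :=
  Complex.exp (2 * Real.pi * Complex.I / n) ^ ((m / n) * (m % n))

/-- The aperiodic autocorrelations `c_u = ∑_{0 ≤ m, m+u < n²} b_m conj(b_{m+u})` of the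
coefficient sequence of `h_n`. -/
noncomputable def hCorr (n : ℕ) (u : ℕ) : ℂ :=
  ∑ m ∈ Finset.range (n ^ 2 - u), hCoef n m * (starRingEnd ℂ) (hCoef n (m + u))

/-!
Write `n = 2s` and `ζ = e^{2πi/n}`, so that `ζ^s = -1`. Cutting the sum defining `c_{nu+s}` into
half-blocks of length `s`, each half-block contributes `±` the conjugate of a geometric sum
`A(v) = ∑_{k<s} ζ^{vk}` with `v = u` or `v = u + 1`, and the signs alternate; what survives is
`c_{nu+s} = conj A(u+1)` for even `u` and `-conj A(u)` for odd `u`. Hence the left-hand side is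
`4 ∑_{t<s} |A(2t+1)|²`, and this sum is `s²` because the odd powers of `ζ` are orthogonal:
`∑_{t<s} ζ^{(2t+1)d} = 0` for `0 < |d| < s`.
-/
open Finset Complex Real ComplexConjugate

lemma sum_range_mul_eq_sum_sum {M : Type*} [AddCommMonoid M] (f : ℕ → M) (n q : ℕ) :
    ∑ m ∈ range (n * q), f m = ∑ j ∈ range q, ∑ k ∈ range n, f (n * j + k) := by
  induction q with
  | zero => simp
  | succ q ih => rw [Nat.mul_succ, sum_range_add, ih, sum_range_succ]

lemma hCoef_mul_add {n j k : ℕ} (hk : k < n) :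
    hCoef n (n * j + k) = exp (2 * π * I / n) ^ (j * k) := by
  have hn : 0 < n := by omega
  rw [hCoef, Nat.mul_add_div hn, Nat.mul_add_mod, Nat.div_eq_of_lt hk, Nat.mod_eq_of_lt hk,
    add_zero]

section HalfTurn

variable {ζ : ℂ} {s : ℕ}

lemma IsPrimitiveRoot.pow_eq_neg_one_of_two_mul (hζ : IsPrimitiveRoot ζ (2 * s)) (hs : s ≠ 0) :
    ζ ^ s = -1 := by
  have h := hζ.pow_of_dvd hs (dvd_mul_left s 2)
  rw [Nat.mul_div_cancel _ (Nat.pos_of_ne_zero hs)] at h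
  exact h.eq_neg_one_of_two_right

lemma pow_mul_mul_conj_pow_add_mul_add (hζ : ‖ζ‖ = 1) (hs : ζ ^ s = -1) (j u k : ℕ) :
    ζ ^ (j * k) * conj (ζ ^ ((j + u) * (k + s))) = (-1) ^ (j + u) * conj ((ζ ^ u) ^ k) := by
  have hunit : ζ * conj ζ = 1 := by rw [mul_conj', hζ]; norm_num
  have hhalf : conj ζ ^ s = -1 := by rw [← map_pow, hs, map_neg, map_one]
  simp only [map_pow]
  calc ζ ^ (j * k) * conj ζ ^ ((j + u) * (k + s))
      = (ζ * conj ζ) ^ (j * k) * (conj ζ ^ s) ^ (j + u) * (conj ζ ^ u) ^ k := by ring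
    _ = (-1) ^ (j + u) * (conj ζ ^ u) ^ k := by rw [hunit, hhalf, one_pow, one_mul]

lemma pow_mul_add_mul_conj_pow_add_mul (hζ : ‖ζ‖ = 1) (hs : ζ ^ s = -1) (j u k : ℕ) :
    ζ ^ (j * (s + k)) * conj (ζ ^ ((j + u + 1) * k)) = (-1) ^ j * conj ((ζ ^ (u + 1)) ^ k) := by
  have hunit : ζ * conj ζ = 1 := by rw [mul_conj', hζ]; norm_num
  simp only [map_pow]
  calc ζ ^ (j * (s + k)) * conj ζ ^ ((j + u + 1) * k)
      = (ζ ^ s) ^ j * (ζ * conj ζ) ^ (j * k) * (conj ζ ^ (u + 1)) ^ k := by ring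
    _ = (-1) ^ j * (conj ζ ^ (u + 1)) ^ k := by rw [hunit, hs, one_pow, mul_one]

end HalfTurn

lemma hCoef_mul_conj_shift_of_lt {s j u k : ℕ} (hk : k < s) :
    hCoef (2 * s) (2 * s * j + k) * conj (hCoef (2 * s) (2 * s * j + k + (2 * s * u + s))) =
      (-1) ^ (j + u) * conj ((exp (2 * π * I / (2 * s : ℕ)) ^ u) ^ k) := by
  have hζ := isPrimitiveRoot_exp (2 * s) (by omega)
  rw [show 2 * s * j + k + (2 * s * u + s) = 2 * s * (j + u) + (k + s) by ring,
    hCoef_mul_add (by omega), hCoef_mul_add (by omega), pow_mul_mul_conj_pow_add_mul_add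
      (hζ.norm'_eq_one (by omega)) (hζ.pow_eq_neg_one_of_two_mul (by omega))]

lemma hCoef_add_mul_conj_shift_of_lt {s j u k : ℕ} (hk : k < s) :
    hCoef (2 * s) (2 * s * j + (s + k)) *
        conj (hCoef (2 * s) (2 * s * j + (s + k) + (2 * s * u + s))) =
      (-1) ^ j * conj ((exp (2 * π * I / (2 * s : ℕ)) ^ (u + 1)) ^ k) := by
  have hζ := isPrimitiveRoot_exp (2 * s) (by omega)
  rw [show 2 * s * j + (s + k) + (2 * s * u + s) = 2 * s * (j + u + 1) + k by ring,
    hCoef_mul_add (by omega), hCoef_mul_add (by omega), pow_mul_add_mul_conj_pow_add_mul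
      (hζ.norm'_eq_one (by omega)) (hζ.pow_eq_neg_one_of_two_mul (by omega))]

lemma hCorr_two_mul_mul_add {s u : ℕ} (hu : u < 2 * s) :
    hCorr (2 * s) (2 * s * u + s) =
      if Even u then conj (∑ k ∈ range s, (exp (2 * π * I / (2 * s : ℕ)) ^ (u + 1)) ^ k)
      else -conj (∑ k ∈ range s, (exp (2 * π * I / (2 * s : ℕ)) ^ u) ^ k) := by
  set ζ := exp (2 * π * I / (2 * s : ℕ))
  set A : ℕ → ℂ := fun v => conj (∑ k ∈ range s, (ζ ^ v) ^ k)
  set p : ℕ → ℂ := fun m => hCoef (2 * s) m * conj (hCoef (2 * s) (m + (2 * s * u + s)))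
  have hlo : ∀ j, ∑ k ∈ range s, p (2 * s * j + k) = (-1) ^ (j + u) * A u := fun j => by
    simp only [p, A, map_sum, mul_sum]
    exact sum_congr rfl fun k hk => hCoef_mul_conj_shift_of_lt (mem_range.1 hk)
  have hhi : ∀ j, ∑ k ∈ range s, p (2 * s * j + (s + k)) = (-1) ^ j * A (u + 1) := fun j => by
    simp only [p, A, map_sum, mul_sum]
    exact sum_congr rfl fun k hk => hCoef_add_mul_conj_shift_of_lt (mem_range.1 hk)
  have hblock : ∀ j, ∑ k ∈ range (2 * s), p (2 * s * j + k) =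
      (-1) ^ j * ((-1) ^ u * A u + A (u + 1)) := by
    intro j
    rw [show range (2 * s) = range (s + s) by rw [two_mul], sum_range_add, hlo, hhi]
    ring
  obtain ⟨q, hq⟩ : ∃ q, q + u + 1 = 2 * s := ⟨2 * s - u - 1, by omega⟩
  have hcorr : hCorr (2 * s) (2 * s * u + s) = ∑ m ∈ range (2 * s * q + s), p m := by
    have hlen : (2 * s) ^ 2 - (2 * s * u + s) = 2 * s * q + s := by
      apply Nat.sub_eq_of_eq_add
      calc (2 * s) ^ 2 = 2 * s * (q + u + 1) := by rw [hq, sq]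
        _ = 2 * s * q + s + (2 * s * u + s) := by ring
    rw [hCorr, hlen]
  have hodd : Odd (q + u) := ⟨s - 1, by omega⟩
  rw [hcorr, sum_range_add, sum_range_mul_eq_sum_sum, sum_congr rfl fun j _ => hblock j,
    ← sum_mul, neg_one_geom_sum, hlo, hodd.neg_one_pow]
  rcases Nat.even_or_odd u with hu | hu
  · have hq : ¬Even q := by rintro ⟨b, rfl⟩; obtain ⟨a, rfl⟩ := hu; omega
    simp only [A, if_pos hu, if_neg hq, hu.neg_one_pow]
    ring
  · have hq : Even q := by obtain ⟨a, rfl⟩ := hu; exact ⟨s - a - 1, by omega⟩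
    simp only [A, if_pos hq, if_neg (Nat.not_even_iff_odd.2 hu)]
    ring

section Orthogonality

variable {ζ : ℂ} {s : ℕ}

lemma IsPrimitiveRoot.sum_range_zpow_odd_mul (hζ : IsPrimitiveRoot ζ (2 * s)) {d : ℤ}
    (hd : |d| < s) :
    ∑ t ∈ range s, ζ ^ ((2 * t + 1 : ℤ) * d) = if d = 0 then (s : ℂ) else 0 := by
  split_ifs with hd0
  · simp [hd0]
  have hζ0 : ζ ≠ 0 := hζ.ne_zero (by have := abs_nonneg d; omega)
  have hx : ζ ^ (2 * d) ≠ 1 := by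
    rw [Ne, hζ.zpow_eq_one_iff_dvd]
    push_cast
    exact fun h => hd0 (Int.eq_zero_of_abs_lt_dvd ((mul_dvd_mul_iff_left two_ne_zero).1 h) hd)
  have hxs : (ζ ^ (2 * d)) ^ s = 1 := by
    rw [← zpow_natCast, ← zpow_mul, hζ.zpow_eq_one_iff_dvd]
    exact ⟨d, by push_cast; ring⟩
  have hgeom : ∑ t ∈ range s, (ζ ^ (2 * d)) ^ t = 0 := by
    have h := geom_sum_mul (ζ ^ (2 * d)) s
    rw [hxs, sub_self] at h
    exact (mul_eq_zero.1 h).resolve_right (sub_ne_zero.2 hx)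
  calc ∑ t ∈ range s, ζ ^ ((2 * t + 1 : ℤ) * d)
        = ζ ^ d * ∑ t ∈ range s, (ζ ^ (2 * d)) ^ t := by
        rw [mul_sum]
        refine sum_congr rfl fun t _ => ?_
        rw [← zpow_natCast, ← zpow_mul, ← zpow_add₀ hζ0]
        ring_nf
    _ = 0 := by rw [hgeom, mul_zero]

lemma IsPrimitiveRoot.sum_range_norm_sq_geom_sum_odd (hζ : IsPrimitiveRoot ζ (2 * s)) :
    ∑ t ∈ range s, ‖∑ k ∈ range s, (ζ ^ (2 * t + 1)) ^ k‖ ^ 2 = s ^ 2 := by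
  rcases s.eq_zero_or_pos with rfl | hs
  · simp
  have hζ0 : ζ ≠ 0 := hζ.ne_zero (by omega)
  have hnorm : ‖ζ‖ = 1 := hζ.norm'_eq_one (by omega)
  have hconj : ∀ a : ℕ, conj (ζ ^ a) = ζ ^ (-(a : ℤ)) := fun a => by
    rw [zpow_neg, zpow_natCast, ← inv_eq_conj (by rw [norm_pow, hnorm, one_pow])]
  have hterm : ∀ t : ℕ, (‖∑ k ∈ range s, (ζ ^ (2 * t + 1)) ^ k‖ : ℂ) ^ 2 =
      ∑ k ∈ range s, ∑ k' ∈ range s, ζ ^ ((2 * t + 1 : ℤ) * ((k : ℤ) - k')) := by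
    intro t
    rw [← mul_conj', map_sum, sum_mul_sum]
    refine sum_congr rfl fun k _ => sum_congr rfl fun k' _ => ?_
    rw [← pow_mul, ← pow_mul, hconj, ← zpow_natCast, ← zpow_add₀ hζ0]
    push_cast
    ring_nf
  have hdiag : ∀ k ∈ range s,
      ∑ k' ∈ range s, ∑ t ∈ range s, ζ ^ ((2 * t + 1 : ℤ) * ((k : ℤ) - k')) = s := by
    intro k hk
    have hk := mem_range.1 hk
    rw [sum_congr rfl fun (k' : ℕ) hk' => hζ.sum_range_zpow_odd_mul (d := (k : ℤ) - k')
      (by have := mem_range.1 hk'; rw [abs_lt]; omega)]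
    simp [sub_eq_zero, hk]
  apply ofReal_injective
  push_cast
  simp_rw [hterm]
  rw [sum_comm, sum_congr rfl fun k _ => sum_comm, sum_congr rfl hdiag, sum_const, card_range,
    nsmul_eq_mul, sq]

end Orthogonality

theorem hCorr_sum_sq_half_general (n : ℕ) (hne : Even n) :
    2 * ∑ u ∈ Finset.range n, ‖hCorr n (n * u + n / 2)‖ ^ 2 = (n : ℝ) ^ 2 := by
  obtain ⟨s, rfl⟩ := hne
  have hpair : ∀ t ∈ range s,
      ∑ i ∈ range 2, ‖hCorr (2 * s) (2 * s * (2 * t + i) + s)‖ ^ 2 =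
        2 * ‖∑ k ∈ range s, (exp (2 * π * I / (2 * s : ℕ)) ^ (2 * t + 1)) ^ k‖ ^ 2 := by
    intro t ht
    have ht := mem_range.1 ht
    rw [sum_range_succ, sum_range_one, add_zero, hCorr_two_mul_mul_add (by omega),
      hCorr_two_mul_mul_add (by omega), if_pos (even_two_mul t),
      if_neg (Nat.not_even_iff_odd.2 (odd_two_mul_add_one t)), norm_neg, RCLike.norm_conj]
    ring
  rcases s.eq_zero_or_pos with rfl | hs
  · simp
  rw [← two_mul, Nat.mul_div_cancel_left s two_pos, sum_range_mul_eq_sum_sum,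
    sum_congr rfl hpair, ← mul_sum,
    (isPrimitiveRoot_exp (2 * s) (by omega)).sum_range_norm_sq_geom_sum_odd]
  push_cast
  ring

/-- For even `n ≥ 2`, `2 ∑_{u=0}^{n-1} |c_{nu+n/2}|² = n²`. -/
theorem hCorr_sum_sq_half (n : ℕ) (hn : 2 ≤ n) (hne : Even n) :
    2 * ∑ u ∈ Finset.range n, ‖hCorr n (n * u + n / 2)‖ ^ 2 = (n : ℝ) ^ 2 :=
  hCorr_sum_sq_half_general n hne
end
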